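/- arXiv:math/0510291 — 3 statements merged into one kernel-verified Lean document; each statement's English description precedes it below -/
import Mathlib

section
/- The set of positive definite integral binary quadratic forms [a,b,c] of discriminant -D = b^2 - 4ac, for a fixed positive integer D, decomposes into finitely many orbits under the action of SL_2(Z) (acting by change of variables). -/
/-!
Every orbit contains a reduced form `[a, b, c]`, i.e. one with `|b| ≤ a ≤ c`: pick a form in
the orbit whose first coefficient `a` is minimal (first coefficients stay positive because a
positive definite form is positive at the nonzero first column of `γ`), and translate by a power
of `T` to get `|b| ≤ a`. Since `S` swaps `a` and `c`, minimality gives `a ≤ c`. A reduced form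
satisfies `3ac ≤ 4ac - b² = D`, so all its coefficients lie in `[-D, D]`, and there are only
finitely many of them.
-/

open Matrix MatrixGroups

/-- The set of positive definite integral binary quadratic forms `[a,b,c]` of
discriminant `-D`, encoded as triples of coefficients. -/
def QD (D : ℕ) : Set (ℤ × ℤ × ℤ) :=
  {Q | 0 < Q.1 ∧ Q.2.1 ^ 2 - 4 * Q.1 * Q.2.2 = -(D : ℤ)}

/-- The action of `γ ∈ SL₂(ℤ)` on a binary quadratic form `[a,b,c]` by change of
variables `(x,y) ↦ (x,y)·γ`, described on coefficients. -/
def formAction (γ : SL(2, ℤ)) (Q : ℤ × ℤ × ℤ) : ℤ × ℤ × ℤ :=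
  let p := (γ : Matrix (Fin 2) (Fin 2) ℤ) 0 0
  let q := (γ : Matrix (Fin 2) (Fin 2) ℤ) 0 1
  let r := (γ : Matrix (Fin 2) (Fin 2) ℤ) 1 0
  let s := (γ : Matrix (Fin 2) (Fin 2) ℤ) 1 1
  let a := Q.1; let b := Q.2.1; let c := Q.2.2
  (a * p ^ 2 + b * p * r + c * r ^ 2,
   2 * a * p * q + b * (p * s + q * r) + 2 * c * r * s,
   a * q ^ 2 + b * q * s + c * s ^ 2)

open ModularGroup

lemma formAction_one (Q : ℤ × ℤ × ℤ) : formAction 1 Q = Q := by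
  simp [formAction]

lemma formAction_formAction (γ δ : SL(2, ℤ)) (Q : ℤ × ℤ × ℤ) :
    formAction γ (formAction δ Q) = formAction (δ * γ) Q := by
  simp only [formAction, Matrix.SpecialLinearGroup.coe_mul, mul_apply, Fin.sum_univ_two]
  refine Prod.ext (by ring) (Prod.ext (by ring) (by ring))

lemma formAction_T_zpow (t a b c : ℤ) :
    formAction (T ^ t) (a, b, c) = (a, 2 * a * t + b, a * t ^ 2 + b * t + c) := by
  simp [formAction, coe_T_zpow]

lemma formAction_S (a b c : ℤ) : formAction S (a, b, c) = (c, -b, a) := by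
  simp [formAction]

lemma mem_QD_iff {D : ℕ} {Q : ℤ × ℤ × ℤ} :
    Q ∈ QD D ↔ 0 < Q.1 ∧ discrim Q.1 Q.2.1 Q.2.2 = -(D : ℤ) :=
  Iff.rfl

lemma discrim_formAction (γ : SL(2, ℤ)) (Q : ℤ × ℤ × ℤ) :
    discrim (formAction γ Q).1 (formAction γ Q).2.1 (formAction γ Q).2.2 =
      discrim Q.1 Q.2.1 Q.2.2 := by
  rw [← mul_one (discrim Q.1 _ _), ← one_pow 2, ← γ.det_coe, det_fin_two]
  simp only [formAction, discrim]
  ring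

lemma quadratic_pos_of_discrim_neg {a b c x y : ℤ} (ha : 0 < a) (hdisc : discrim a b c < 0)
    (hxy : x ≠ 0 ∨ y ≠ 0) : 0 < a * x ^ 2 + b * x * y + c * y ^ 2 := by
  have key : 4 * a * (a * x ^ 2 + b * x * y + c * y ^ 2) =
      (2 * a * x + b * y) ^ 2 - discrim a b c * y ^ 2 := by
    simp only [discrim]; ring
  refine pos_of_mul_pos_right (a := 4 * a) ?_ (by positivity)
  rw [key]
  rcases eq_or_ne y 0 with rfl | hy
  · have hx : x ≠ 0 := by simpa using hxy
    have : 0 < (2 * a * x) ^ 2 := by positivity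
    simpa using this
  · nlinarith [sq_nonneg (2 * a * x + b * y), sq_pos_of_ne_zero hy]

lemma formAction_mem_QD {D : ℕ} (hD : 0 < D) (γ : SL(2, ℤ)) {Q : ℤ × ℤ × ℤ} (hQ : Q ∈ QD D) :
    formAction γ Q ∈ QD D := by
  obtain ⟨ha, hdisc⟩ := mem_QD_iff.mp hQ
  refine ⟨quadratic_pos_of_discrim_neg ha (by omega) ?_, (discrim_formAction γ Q).trans hdisc⟩
  by_contra! h
  have hdet := γ.det_coe
  rw [det_fin_two, h.1, h.2] at hdet
  simp at hdet

lemma exists_abs_two_mul_add_le {a : ℤ} (ha : 0 < a) (b : ℤ) : ∃ t : ℤ, |2 * a * t + b| ≤ a := by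
  -- with this `t`, `2 * a * t + b = (b + a) % (2 * a) - a`
  refine ⟨-((b + a) / (2 * a)), abs_le.2 ?_⟩
  have h := Int.mul_ediv_add_emod (b + a) (2 * a)
  have h0 := Int.emod_nonneg (b + a) (show 2 * a ≠ 0 by omega)
  have h1 := Int.emod_lt_of_pos (b + a) (show 0 < 2 * a by omega)
  constructor <;> linarith

def IsReducedForm (Q : ℤ × ℤ × ℤ) : Prop :=
  |Q.2.1| ≤ Q.1 ∧ Q.1 ≤ Q.2.2

lemma exists_isReducedForm_formAction {D : ℕ} (hD : 0 < D) {Q : ℤ × ℤ × ℤ} (hQ : Q ∈ QD D) :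
    ∃ γ : SL(2, ℤ), IsReducedForm (formAction γ Q) := by
  obtain ⟨γ₀, hmin⟩ : ∃ γ₀ : SL(2, ℤ), ∀ γ, (formAction γ₀ Q).1 ≤ (formAction γ Q).1 := by
    refine ⟨Function.argmin fun γ : SL(2, ℤ) ↦ (formAction γ Q).1.toNat, fun γ ↦ ?_⟩
    have := Function.argmin_le (fun γ : SL(2, ℤ) ↦ (formAction γ Q).1.toNat) γ
    have := (formAction_mem_QD hD γ hQ).1
    omega
  have ha := (formAction_mem_QD hD γ₀ hQ).1
  generalize hQ₀ : formAction γ₀ Q = Q₀ at hmin ha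
  obtain ⟨a, b, c⟩ := Q₀
  obtain ⟨t, ht⟩ := exists_abs_two_mul_add_le ha b
  refine ⟨γ₀ * T ^ t, ?_⟩
  have hS := hmin (γ₀ * T ^ t * S)
  rw [← formAction_formAction, ← formAction_formAction, hQ₀, formAction_T_zpow,
    formAction_S] at hS
  rw [← formAction_formAction, hQ₀, formAction_T_zpow]
  exact ⟨ht, hS⟩

lemma isReducedForm_mem_Icc_prod {D : ℕ} {Q : ℤ × ℤ × ℤ} (hQ : Q ∈ QD D) (hR : IsReducedForm Q) :
    Q ∈ Set.Icc (-(D : ℤ)) D ×ˢ Set.Icc (-(D : ℤ)) D ×ˢ Set.Icc (-(D : ℤ)) D := by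
  obtain ⟨a, b, c⟩ := Q
  obtain ⟨ha, hdisc⟩ := hQ
  obtain ⟨hb, hac⟩ := hR
  rw [abs_le] at hb
  have h3ac : 3 * a * c ≤ D := by nlinarith
  simp only [Set.mem_prod, Set.mem_Icc]
  refine ⟨⟨?_, ?_⟩, ⟨?_, ?_⟩, ?_, ?_⟩ <;> nlinarith

lemma finite_setOf_mem_QD_isReducedForm (D : ℕ) : {Q | Q ∈ QD D ∧ IsReducedForm Q}.Finite :=
  ((Set.finite_Icc _ _).prod ((Set.finite_Icc _ _).prod (Set.finite_Icc _ _))).subset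
    fun _ hQ ↦ isReducedForm_mem_Icc_prod hQ.1 hQ.2

/-- For every positive integer `D`, the set `Q_D` of positive definite integral binary
quadratic forms of discriminant `-D` decomposes into finitely many `SL₂(ℤ)`-orbits:
there is a finite set of representatives meeting every orbit. -/
theorem finitely_many_orbits (D : ℕ) (hD : 0 < D) :
    ∃ S : Finset (ℤ × ℤ × ℤ), (↑S : Set (ℤ × ℤ × ℤ)) ⊆ QD D ∧
      ∀ Q ∈ QD D, ∃ Q' ∈ S, ∃ γ : SL(2, ℤ), formAction γ Q' = Q := by
  have hfin := finite_setOf_mem_QD_isReducedForm D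
  refine ⟨hfin.toFinset, fun Q hQ ↦ (hfin.mem_toFinset.1 hQ).1, fun Q hQ ↦ ?_⟩
  obtain ⟨γ, hγ⟩ := exists_isReducedForm_formAction hD hQ
  refine ⟨formAction γ Q, hfin.mem_toFinset.2 ⟨formAction_mem_QD hD γ hQ, hγ⟩, γ⁻¹, ?_⟩
  rw [formAction_formAction, mul_inv_cancel, formAction_one]
end

section
/- The group SL_2(ℤ), acting by conjugation on the trace-zero matrices, maps the lattice L = { [[b, c],[a, -b]] : a,b,c ∈ ℤ } to itself and acts trivially on the discriminant group L^#/L ≅ ℤ/2ℤ. -/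
open Matrix MatrixGroups

/-- The lattice `L = { [[b, c],[a, -b]] : a,b,c ∈ ℤ }`. -/
def Lset : Set (Matrix (Fin 2) (Fin 2) ℚ) :=
  {X | ∃ a b c : ℤ, X = !![(b : ℚ), c; a, -b]}

/-- The dual lattice `L^# = { [[b/2, c],[a, -b/2]] : a,b,c ∈ ℤ }` of `L` with respect
to `(X,Y) = -tr(XY)`. -/
def LdualSet : Set (Matrix (Fin 2) (Fin 2) ℚ) :=
  {Y | ∃ a b c : ℤ, Y = !![(b : ℚ) / 2, c; a, -(b : ℚ) / 2]}

/-- The conjugation action of `g ∈ SL₂(ℤ)` on rational `2 × 2` matrices. -/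
def conjAct (g : SL(2, ℤ)) (X : Matrix (Fin 2) (Fin 2) ℚ) : Matrix (Fin 2) (Fin 2) ℚ :=
  ((g : Matrix (Fin 2) (Fin 2) ℤ).map (Int.cast : ℤ → ℚ)) * X *
    (((g⁻¹ : SL(2, ℤ)) : Matrix (Fin 2) (Fin 2) ℤ).map (Int.cast : ℤ → ℚ))

/-
Conjugation by `g ∈ SL₂(ℤ)` maps integral matrices to integral matrices (as `g⁻¹` is
integral too), preserves the trace and fixes scalars. Now `L` is the set of integral
trace-zero matrices, and `L^#` the set of trace-zero `Y` with `Y + t • 1` integral for some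
`t ∈ ℚ` (namely `t = b / 2`); for such `Y`, `g.Y - Y = g.(Y + t • 1) - (Y + t • 1)` is
integral of trace zero.
-/

def intMatrix (n : Type*) [Fintype n] [DecidableEq n] : Subring (Matrix n n ℚ) :=
  (Int.castRingHom ℚ).mapMatrix.range

lemma map_intCast_mem_intMatrix {n : Type*} [Fintype n] [DecidableEq n] (A : Matrix n n ℤ) :
    A.map (Int.cast : ℤ → ℚ) ∈ intMatrix n :=
  ⟨A, rfl⟩

lemma mem_Lset_iff {X : Matrix (Fin 2) (Fin 2) ℚ} :
    X ∈ Lset ↔ X ∈ intMatrix (Fin 2) ∧ X.trace = 0 := by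
  constructor
  · rintro ⟨a, b, c, rfl⟩
    refine ⟨⟨!![b, c; a, -b], ?_⟩, by simp [Matrix.trace_fin_two]⟩
    ext i j; fin_cases i <;> fin_cases j <;> simp
  · rintro ⟨⟨A, rfl⟩, htr⟩
    refine ⟨A 1 0, A 0 0, A 0 1, ?_⟩
    have h11 : (A 1 1 : ℚ) = -A 0 0 := by
      simp only [Matrix.trace_fin_two, RingHom.mapMatrix_apply, Matrix.map_apply,
        eq_intCast] at htr
      linarith
    ext i j; fin_cases i <;> fin_cases j <;> simp [h11]

lemma mem_LdualSet_iff {Y : Matrix (Fin 2) (Fin 2) ℚ} :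
    Y ∈ LdualSet ↔ Y.trace = 0 ∧ ∃ t : ℚ, Y + t • 1 ∈ intMatrix (Fin 2) := by
  constructor
  · rintro ⟨a, b, c, rfl⟩
    refine ⟨by simp [Matrix.trace_fin_two, neg_div], b / 2, !![b, c; a, 0], ?_⟩
    ext i j; fin_cases i <;> fin_cases j <;> simp [neg_div, add_halves]
  · rintro ⟨htr, t, A, hA⟩
    obtain rfl : Y = A.map (Int.cast : ℤ → ℚ) - t • 1 := eq_sub_of_add_eq hA.symm
    refine ⟨A 1 0, A 0 0 - A 1 1, A 0 1, ?_⟩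
    have ht : t = (A 0 0 + A 1 1 : ℚ) / 2 := by
      simp only [Matrix.trace_fin_two, Matrix.sub_apply, Matrix.smul_apply, Matrix.map_apply,
        Matrix.one_apply_eq, smul_eq_mul, mul_one] at htr
      linarith
    ext i j; fin_cases i <;> fin_cases j <;> simp [ht] <;> ring

lemma map_intCast_coe_mul {n : Type*} [Fintype n] [DecidableEq n]
    (g h : Matrix.SpecialLinearGroup n ℤ) :
    ((g * h : Matrix.SpecialLinearGroup n ℤ) : Matrix n n ℤ).map (Int.cast : ℤ → ℚ) =
      (g : Matrix n n ℤ).map (Int.cast : ℤ → ℚ) *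
        (h : Matrix n n ℤ).map (Int.cast : ℤ → ℚ) := by
  change (Int.castRingHom ℚ).mapMatrix _ =
    (Int.castRingHom ℚ).mapMatrix _ * (Int.castRingHom ℚ).mapMatrix _
  rw [← map_mul, Matrix.SpecialLinearGroup.coe_mul]

section conjAct

variable (g : SL(2, ℤ))

lemma map_inv_mul_map :
    ((g⁻¹ : SL(2, ℤ)) : Matrix (Fin 2) (Fin 2) ℤ).map (Int.cast : ℤ → ℚ) *
      (g : Matrix (Fin 2) (Fin 2) ℤ).map (Int.cast : ℤ → ℚ) = 1 := by
  rw [← map_intCast_coe_mul, inv_mul_cancel]; simp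

lemma map_mul_map_inv :
    (g : Matrix (Fin 2) (Fin 2) ℤ).map (Int.cast : ℤ → ℚ) *
      ((g⁻¹ : SL(2, ℤ)) : Matrix (Fin 2) (Fin 2) ℤ).map (Int.cast : ℤ → ℚ) = 1 := by
  rw [← map_intCast_coe_mul, mul_inv_cancel]; simp

lemma conjAct_mem_intMatrix {X : Matrix (Fin 2) (Fin 2) ℚ} (hX : X ∈ intMatrix (Fin 2)) :
    conjAct g X ∈ intMatrix (Fin 2) :=
  Subring.mul_mem _ (Subring.mul_mem _ (map_intCast_mem_intMatrix _) hX)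
    (map_intCast_mem_intMatrix _)

lemma trace_conjAct (X : Matrix (Fin 2) (Fin 2) ℚ) : (conjAct g X).trace = X.trace := by
  rw [conjAct, Matrix.trace_mul_comm, ← Matrix.mul_assoc, map_inv_mul_map, Matrix.one_mul]

lemma conjAct_add_smul_one (X : Matrix (Fin 2) (Fin 2) ℚ) (t : ℚ) :
    conjAct g (X + t • 1) = conjAct g X + t • 1 := by
  simp only [conjAct, Matrix.mul_add, Matrix.add_mul, Matrix.mul_smul, Matrix.smul_mul,
    Matrix.mul_one, map_mul_map_inv]

end conjAct

/-- `SL₂(ℤ)`, acting by conjugation, maps the lattice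
`L = { [[b, c],[a, -b]] : a,b,c ∈ ℤ }` to itself, maps the dual lattice `L^#` to
itself, and acts trivially on the discriminant group `L^#/L ≅ ℤ/2ℤ`:
`g.Y - Y ∈ L` for all `Y ∈ L^#`. -/
theorem SL2Z_preserves_L_acts_trivially_on_discriminant (g : SL(2, ℤ)) :
    (∀ X ∈ Lset, conjAct g X ∈ Lset) ∧
    (∀ Y ∈ LdualSet, conjAct g Y ∈ LdualSet) ∧
    (∀ Y ∈ LdualSet, conjAct g Y - Y ∈ Lset) := by
  refine ⟨fun X hX => ?_, fun Y hY => ?_, fun Y hY => ?_⟩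
  · obtain ⟨hint, htr⟩ := mem_Lset_iff.1 hX
    exact mem_Lset_iff.2 ⟨conjAct_mem_intMatrix g hint, by rw [trace_conjAct, htr]⟩
  · obtain ⟨htr, t, ht⟩ := mem_LdualSet_iff.1 hY
    refine mem_LdualSet_iff.2 ⟨by rw [trace_conjAct, htr], t, ?_⟩
    rw [← conjAct_add_smul_one]
    exact conjAct_mem_intMatrix g ht
  · obtain ⟨-, t, ht⟩ := mem_LdualSet_iff.1 hY
    have hdiff : conjAct g Y - Y = conjAct g (Y + t • 1) - (Y + t • 1) := by
      rw [conjAct_add_smul_one]; abel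
    rw [hdiff, mem_Lset_iff, Matrix.trace_sub, trace_conjAct, sub_self]
    exact ⟨Subring.sub_mem _ (conjAct_mem_intMatrix g ht) ht, rfl⟩
end

section
/- Every point z in the upper half plane is SL_2(ℤ)-equivalent to a point in the standard fundamental domain F = { z : -1/2 ≤ Re(z) < 1/2, |z| > 1 } ∪ { z : -1/2 ≤ Re(z) ≤ 0, |z| = 1 }, and no two distinct points of F are SL_2(ℤ)-equivalent. -/
open Matrix MatrixGroups UpperHalfPlane Complex

/-- The standard (strict) fundamental domain for `SL₂(ℤ)` acting on the upper half
plane: `{ z : -1/2 ≤ Re z < 1/2, |z| > 1 } ∪ { z : -1/2 ≤ Re z ≤ 0, |z| = 1 }`. -/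
def stdFundDomain : Set ℍ :=
  {z | (-(1 / 2 : ℝ) ≤ z.re ∧ z.re < 1 / 2 ∧ 1 < ‖(z : ℂ)‖) ∨
       (-(1 / 2 : ℝ) ≤ z.re ∧ z.re ≤ 0 ∧ ‖(z : ℂ)‖ = 1)}

/-!
Mathlib's closed domain `𝒟 = {1 ≤ |z|, |Re z| ≤ 1/2}` meets every orbit. A point of `𝒟` outside
`F` lies on the line `Re z = 1/2`, which `T⁻¹` moves into `F`, or on the unit circle with
`Re z > 0`, which `S` moves into `F` since it acts there as `z ↦ -z̄`. For uniqueness, Mathlib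
classifies the pairs `z`, `g • z` both in `𝒟`: in each case `g` fixes `z`, or one of the two
points lies on the part of the boundary of `𝒟` excluded from `F`.
-/

open ModularGroup
open scoped Modular ComplexConjugate

lemma mem_stdFundDomain_iff {z : ℍ} :
    z ∈ stdFundDomain ↔ z ∈ 𝒟 ∧ z.re < 1 / 2 ∧ (‖(z : ℂ)‖ = 1 → z.re ≤ 0) := by
  simp only [stdFundDomain, fd, Set.mem_ofPred_eq, one_le_normSq_iff, abs_le]
  constructor
  · rintro (⟨hre, hre', hnorm⟩ | ⟨hre, hre', hnorm⟩)
    · exact ⟨⟨hnorm.le, hre, hre'.le⟩, hre', fun h ↦ absurd h hnorm.ne'⟩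
    · exact ⟨⟨hnorm.ge, hre, by linarith⟩, by linarith, fun _ ↦ hre'⟩
  · rintro ⟨⟨hnorm, hre, -⟩, hre', harc⟩
    rcases hnorm.lt_or_eq with hnorm | hnorm
    · exact .inl ⟨hre, hre', hnorm⟩
    · exact .inr ⟨hre, harc hnorm.symm, hnorm.symm⟩

lemma mem_stdFundDomain_of_mem_fd_of_re_nonpos {z : ℍ} (hz : z ∈ 𝒟) (hre : z.re ≤ 0) :
    z ∈ stdFundDomain :=
  mem_stdFundDomain_iff.2 ⟨hz, by linarith, fun _ ↦ hre⟩

lemma coe_S_smul_of_norm_eq_one {z : ℍ} (hz : ‖(z : ℂ)‖ = 1) :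
    ((S • z : ℍ) : ℂ) = -conj (z : ℂ) := by
  rw [modular_S_smul, coe_mk, inv_neg, inv_def, normSq_eq_norm_sq, hz]
  simp

lemma S_smul_mem_fd_of_norm_eq_one {z : ℍ} (hz : z ∈ 𝒟) (hnorm : ‖(z : ℂ)‖ = 1) :
    S • z ∈ 𝒟 := by
  have h := coe_S_smul_of_norm_eq_one hnorm
  refine ⟨?_, ?_⟩
  · rw [h, normSq_neg, normSq_conj, one_le_normSq_iff, hnorm]
  · rw [← coe_re, h, neg_re, conj_re, abs_neg]; exact hz.2

lemma T_inv_smul_mem_fd_of_re_eq_half {z : ℍ} (hz : z ∈ 𝒟) (hre : z.re = 1 / 2) :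
    T⁻¹ • z ∈ 𝒟 := by
  have hnormSq : normSq (T⁻¹ • z : ℍ) = normSq (z : ℂ) := by
    rw [normSq_apply, normSq_apply, coe_re, coe_im, coe_re, coe_im, re_T_inv_smul,
      im_T_inv_smul, hre]
    ring
  refine ⟨hnormSq ▸ hz.1, ?_⟩
  rw [re_T_inv_smul, hre]
  norm_num [abs_of_neg]

lemma exists_smul_mem_stdFundDomain_of_mem_fd {z : ℍ} (hz : z ∈ 𝒟) :
    ∃ g : SL(2, ℤ), g • z ∈ stdFundDomain := by
  rcases le_or_gt z.re 0 with hre | hre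
  · exact ⟨1, by simpa using mem_stdFundDomain_of_mem_fd_of_re_nonpos hz hre⟩
  rcases (le_of_abs_le hz.2).lt_or_eq with hre' | hre'
  · rcases (one_le_normSq_iff.1 hz.1).lt_or_eq with hnorm | hnorm
    · exact ⟨1, by simpa using mem_stdFundDomain_iff.2 ⟨hz, hre', fun h ↦ absurd h hnorm.ne'⟩⟩
    · refine ⟨S, mem_stdFundDomain_of_mem_fd_of_re_nonpos
        (S_smul_mem_fd_of_norm_eq_one hz hnorm.symm) ?_⟩
      rw [← coe_re, coe_S_smul_of_norm_eq_one hnorm.symm, neg_re, conj_re, coe_re]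
      linarith
  · refine ⟨T⁻¹, mem_stdFundDomain_of_mem_fd_of_re_nonpos
      (T_inv_smul_mem_fd_of_re_eq_half hz hre') ?_⟩
    rw [re_T_inv_smul, hre']
    norm_num

lemma S_smul_eq_self_of_mem_stdFundDomain {z : ℍ} (hz : z ∈ stdFundDomain)
    (hS : S • z ∈ stdFundDomain) (hnorm : ‖(z : ℂ)‖ = 1) : S • z = z := by
  have h := coe_S_smul_of_norm_eq_one hnorm
  have hre : (S • z).re = -z.re := by rw [← coe_re, h, neg_re, conj_re, coe_re]
  have hSnorm : ‖((S • z : ℍ) : ℂ)‖ = 1 := by rw [h, norm_neg, norm_conj, hnorm]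
  have hz0 : z.re = 0 := le_antisymm ((mem_stdFundDomain_iff.1 hz).2.2 hnorm)
    (by linarith [(mem_stdFundDomain_iff.1 hS).2.2 hSnorm])
  apply UpperHalfPlane.ext
  rw [h]
  apply Complex.ext <;> simp [hz0]

lemma smul_eq_self_of_mem_stdFundDomain {z : ℍ} {g : SL(2, ℤ)} (hz : z ∈ stdFundDomain)
    (hg : g • z ∈ stdFundDomain) : g • z = z := by
  obtain ⟨hz_fd, hz_re, -⟩ := mem_stdFundDomain_iff.1 hz
  obtain ⟨hg_fd, hg_re, -⟩ := mem_stdFundDomain_iff.1 hg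
  have smul_eq_of_eq_or_neg (h : SL(2, ℤ)) : g = h ∨ g = -h → g • z = h • z := by
    rintro (rfl | rfl) <;> simp only [SL_neg_smul]
  have hz_ne : z ≠ (1 : ℝ) +ᵥ ρ := by
    rintro rfl
    norm_num [← coe_re, coe_vadd, ρ] at hz_re
  rcases cases_of_mem_fd_smul_mem_fd hz_fd hg_fd with
    h | ⟨h, hre⟩ | ⟨-, hre⟩ | ⟨h, hnorm⟩ | ⟨-, h⟩ | ⟨-, h⟩ | ⟨-, h⟩ | ⟨h, rfl⟩ | ⟨h, rfl⟩ | ⟨h, rfl⟩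
  · rw [smul_eq_of_eq_or_neg 1 h, one_smul]
  · rw [smul_eq_of_eq_or_neg T h, re_T_smul, hre] at hg_re
    norm_num at hg_re
  · linarith
  · rw [smul_eq_of_eq_or_neg S h] at hg ⊢
    exact S_smul_eq_self_of_mem_stdFundDomain hz hg hnorm
  · exact absurd h hz_ne
  · exact absurd h hz_ne
  · exact absurd h hz_ne
  · rw [smul_eq_of_eq_or_neg _ h]
    exact stabilizer_ρ.2 (by simp)
  · rw [smul_eq_of_eq_or_neg _ h, mul_assoc, mul_smul, stabilizer_ρ.2 (by simp), re_T_smul] at hg_re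
    norm_num [← coe_re, ρ] at hg_re
  · rw [smul_eq_of_eq_or_neg _ h]
    exact stabilizer_ρ.2 (by simp)

/-- Every point of the upper half plane is `SL₂(ℤ)`-equivalent to a point of the
standard fundamental domain `F`, and no two distinct points of `F` are
`SL₂(ℤ)`-equivalent. -/
theorem fundamental_domain_exists_unique :
    (∀ z : ℍ, ∃ g : SL(2, ℤ), g • z ∈ stdFundDomain) ∧
    (∀ z ∈ stdFundDomain, ∀ w ∈ stdFundDomain, (∃ g : SL(2, ℤ), g • z = w) → z = w) := by
  refine ⟨fun z ↦ ?_, ?_⟩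
  · obtain ⟨g, hg⟩ := exists_smul_mem_fd z
    obtain ⟨h, hh⟩ := exists_smul_mem_stdFundDomain_of_mem_fd hg
    exact ⟨h * g, by rwa [mul_smul]⟩
  · rintro z hz _ hw ⟨g, rfl⟩
    exact (smul_eq_self_of_mem_stdFundDomain hz hw).symm
end
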